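/- arXiv:1210.2597 — 2 statements merged into one kernel-verified Lean document; each statement's English description precedes it below -/
import Mathlib

section
/- Let D(t) ⊂ ℝ² be defined as follows: with g(x,t) = (x²+t²)/(2t) for |x| ≤ t and g(x,t) = |x| for |x| ≥ t (and g(x,0) := |x|), with f₁ = (1/2, −1/2), f₂ = (1/2, 1/2), let D₁(t) = { x f₁ + y f₂ : x ∈ ℝ, y ≥ g(x,t) − 2 }, let Dᵢ(t) for i = 2,3,4 be the image of D₁(t) under rotation about the origin by angle (i−1)π/2, and let D(t) = D₁(t) ∩ D₂(t) ∩ D₃(t) ∩ D₄(t). Then for every t ≥ 0 the set D(t) is convex and compact, and D(t) is nonempty if and only if t ≤ 4. -/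
open Real Set

/-- Rost's profile `g(x,t) = (x²+t²)/(2t)` if `|x| ≤ t`, `g(x,t) = |x|` if `|x| ≥ t`.
(Note that this formula also gives `g(x,0) = |x|`, since in Lean `0/0 = 0`.) -/
noncomputable def rost (x t : ℝ) : ℝ := if |x| ≤ t then (x ^ 2 + t ^ 2) / (2 * t) else |x|

/-- `f₁ = (e₁ − e₂)/2`. -/
noncomputable def fOne : ℝ × ℝ := (1/2, -1/2)

/-- `f₂ = (e₁ + e₂)/2`. -/
noncomputable def fTwo : ℝ × ℝ := (1/2, 1/2)

/-- Rotation of the plane about the origin by angle `π/2`. -/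
def rotQuarter (p : ℝ × ℝ) : ℝ × ℝ := (-p.2, p.1)

/-- `D₁(t)`: the epigraph of `g(·,t) − 2` in the frame `(0, f₁, f₂)`. -/
noncomputable def dropletOne (t : ℝ) : Set (ℝ × ℝ) :=
  {p | ∃ x y : ℝ, rost x t - 2 ≤ y ∧ p = x • fOne + y • fTwo}

/-- `D(t) = D₁(t) ∩ D₂(t) ∩ D₃(t) ∩ D₄(t)`, where `Dᵢ(t)` is the image of `D₁(t)` under
rotation by `(i−1)π/2` about the origin. -/
noncomputable def droplet (t : ℝ) : Set (ℝ × ℝ) :=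
  dropletOne t ∩ (rotQuarter '' dropletOne t) ∩
    (rotQuarter '' (rotQuarter '' dropletOne t)) ∩
    (rotQuarter '' (rotQuarter '' (rotQuarter '' dropletOne t)))

/- ### Auxiliary lemmas -/

lemma rost_neg (x t : ℝ) : rost (-x) t = rost x t := by
  simp [rost, abs_neg, neg_sq]

lemma mem_dropletOne {t : ℝ} {p : ℝ × ℝ} :
    p ∈ dropletOne t ↔ rost (p.1 - p.2) t - 2 ≤ p.1 + p.2 := by
  constructor
  · rintro ⟨x, y, h, rfl⟩
    have e1 : (x • fOne + y • fTwo).1 = (x + y) / 2 := by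
      simp [fOne, fTwo]; ring
    have e2 : (x • fOne + y • fTwo).2 = (y - x) / 2 := by
      simp [fOne, fTwo]; ring
    rw [e1, e2, show (x + y) / 2 - (y - x) / 2 = x by ring,
      show (x + y) / 2 + (y - x) / 2 = y by ring]
    exact h
  · intro h
    refine ⟨p.1 - p.2, p.1 + p.2, h, ?_⟩
    have : p = (p.1, p.2) := rfl
    rw [this]
    simp [fOne, fTwo, Prod.ext_iff]
    constructor <;> ring

lemma mem_rot {S : Set (ℝ × ℝ)} {p : ℝ × ℝ} :
    p ∈ rotQuarter '' S ↔ (p.2, -p.1) ∈ S := by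
  constructor
  · rintro ⟨q, hq, rfl⟩
    simpa [rotQuarter] using hq
  · intro h
    exact ⟨(p.2, -p.1), h, by simp [rotQuarter]⟩

lemma mem_droplet {t : ℝ} {p : ℝ × ℝ} :
    p ∈ droplet t ↔
      rost (p.1 - p.2) t + |p.1 + p.2| ≤ 2 ∧ rost (p.1 + p.2) t + |p.1 - p.2| ≤ 2 := by
  simp only [droplet, mem_inter_iff, mem_rot, mem_dropletOne]
  constructor
  · rintro ⟨⟨⟨h1, h2⟩, h3⟩, h4⟩
    rw [show p.2 - -p.1 = p.1 + p.2 by ring] at h2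
    rw [show -p.1 - -p.2 = -(p.1 - p.2) by ring, rost_neg] at h3
    rw [show -p.2 - - -p.1 = -(p.1 + p.2) by ring, rost_neg] at h4
    constructor
    · rcases abs_cases (p.1 + p.2) with ⟨h, _⟩ | ⟨h, _⟩ <;> linarith
    · rcases abs_cases (p.1 - p.2) with ⟨h, _⟩ | ⟨h, _⟩ <;> linarith
  · rintro ⟨h1, h2⟩
    have a1 := le_abs_self (p.1 + p.2)
    have a2 := neg_abs_le (p.1 + p.2)
    have a3 := le_abs_self (p.1 - p.2)
    have a4 := neg_abs_le (p.1 - p.2)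
    refine ⟨⟨⟨by linarith, ?_⟩, ?_⟩, ?_⟩
    · rw [show p.2 - -p.1 = p.1 + p.2 by ring]; linarith
    · rw [show -p.1 - -p.2 = -(p.1 - p.2) by ring, rost_neg]; linarith
    · rw [show -p.2 - - -p.1 = -(p.1 + p.2) by ring, rost_neg]; linarith

lemma rost_lb {t : ℝ} (ht : 0 ≤ t) (x s : ℝ) (hs : |s| ≤ 1) :
    s * x + t / 2 * (1 - s ^ 2) ≤ rost x t := by
  have hs1 := abs_le.mp hs
  unfold rost
  split_ifs with h
  · rcases ht.eq_or_lt with rfl | ht'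
    · have hx : x = 0 := abs_nonpos_iff.mp h
      subst hx; simp
    · rw [le_div_iff₀ (by positivity)]
      nlinarith [sq_nonneg (x - t * s)]
  · push_neg at h
    have hx : 0 < |x| := lt_of_le_of_lt ht h
    have h1 : s * x ≤ |s| * |x| := by
      calc s * x ≤ |s * x| := le_abs_self _
      _ = |s| * |x| := abs_mul s x
    have h2 : 0 ≤ 1 - s ^ 2 := by nlinarith [sq_abs s, abs_nonneg s]
    nlinarith [sq_nonneg (1 - |s|), sq_abs s, abs_nonneg s]

lemma rost_rep {t : ℝ} (ht : 0 ≤ t) (x : ℝ) :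
    ∃ s : ℝ, |s| ≤ 1 ∧ rost x t = s * x + t / 2 * (1 - s ^ 2) := by
  unfold rost
  split_ifs with h
  · rcases ht.eq_or_lt with rfl | ht'
    · have hx : x = 0 := abs_nonpos_iff.mp h
      exact ⟨1, by norm_num, by subst hx; norm_num⟩
    · refine ⟨x / t, ?_, ?_⟩
      · rw [abs_div, abs_of_pos ht', div_le_one ht']
        exact h
      · field_simp
        ring
  · refine ⟨if 0 ≤ x then 1 else -1, ?_, ?_⟩
    · split_ifs <;> norm_num
    · split_ifs with hx
      · rw [abs_of_nonneg hx]; ring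
      · rw [abs_of_neg (not_le.mp hx)]; ring

lemma abs_le_rost {t : ℝ} (ht : 0 ≤ t) (x : ℝ) : |x| ≤ rost x t := by
  unfold rost
  split_ifs with h
  · rcases ht.eq_or_lt with rfl | ht'
    · have hx : x = 0 := abs_nonpos_iff.mp h
      subst hx; simp
    · rw [le_div_iff₀ (by positivity)]
      nlinarith [sq_nonneg (|x| - t), sq_abs x]
  · exact le_refl _

lemma half_le_rost {t : ℝ} (ht : 0 ≤ t) (x : ℝ) : t / 2 ≤ rost x t := by
  unfold rost
  split_ifs with h
  · rcases ht.eq_or_lt with rfl | ht'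
    · have hx : x = 0 := abs_nonpos_iff.mp h
      subst hx; simp
    · rw [le_div_iff₀ (by positivity)]
      nlinarith [sq_nonneg x]
  · push_neg at h
    have := abs_nonneg x
    linarith

lemma rost_zero_left {t : ℝ} (ht : 0 ≤ t) : rost 0 t = t / 2 := by
  unfold rost
  rw [if_pos (by simpa using ht)]
  rcases ht.eq_or_lt with rfl | ht'
  · norm_num
  · field_simp
    ring

lemma rost_comb {t : ℝ} (ht : 0 ≤ t) {x y a b : ℝ} (ha : 0 ≤ a) (hb : 0 ≤ b)
    (hab : a + b = 1) : rost (a * x + b * y) t ≤ a * rost x t + b * rost y t := by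
  obtain ⟨s, hs, hrep⟩ := rost_rep ht (a * x + b * y)
  have l1 := rost_lb ht x s hs
  have l2 := rost_lb ht y s hs
  have m1 : a * (s * x + t / 2 * (1 - s ^ 2)) ≤ a * rost x t :=
    mul_le_mul_of_nonneg_left l1 ha
  have m2 : b * (s * y + t / 2 * (1 - s ^ 2)) ≤ b * rost y t :=
    mul_le_mul_of_nonneg_left l2 hb
  have : s * (a * x + b * y) + t / 2 * (1 - s ^ 2)
      = a * (s * x + t / 2 * (1 - s ^ 2)) + b * (s * y + t / 2 * (1 - s ^ 2)) := by
    have : b = 1 - a := by linarith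
    subst this; ring
  linarith [hrep.le, hrep.ge, m1, m2, this.le, this.ge]

lemma rost_continuous {t : ℝ} (ht : 0 ≤ t) : Continuous (fun x => rost x t) := by
  rcases ht.eq_or_lt with rfl | ht'
  · have : (fun x => rost x 0) = fun x => |x| := by
      funext x
      unfold rost
      split_ifs with h
      · have hx : x = 0 := abs_nonpos_iff.mp h
        subst hx; simp
      · rfl
    rw [this]; exact continuous_abs
  · have heq : (fun x => rost x t) = fun x => (x ^ 2 + (max |x| t) ^ 2) / (2 * max |x| t) := by
      funext x
      unfold rost
      split_ifs with h
      · rw [max_eq_right h]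
      · push_neg at h
        rw [max_eq_left h.le]
        have hx : (0:ℝ) < |x| := lt_of_le_of_lt ht h
        field_simp
        nlinarith [sq_abs x]
    rw [heq]
    apply Continuous.div
    · exact (continuous_pow 2).add ((continuous_abs.max continuous_const).pow 2)
    · exact continuous_const.mul (continuous_abs.max continuous_const)
    · intro x
      have : (0:ℝ) < max |x| t := lt_of_lt_of_le ht' (le_max_right _ _)
      positivity

/-- for every `t ≥ 0` the limiting droplet `D(t)` is convex and compact,
and it is nonempty if and only if `t ≤ 4`. -/
theorem droplet_convex_compact (t : ℝ) (ht : 0 ≤ t) :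
    Convex ℝ (droplet t) ∧ IsCompact (droplet t) ∧ ((droplet t).Nonempty ↔ t ≤ 4) := by
  refine ⟨?_, ?_, ?_⟩
  · -- Convexity
    intro p hp q hq a b ha hb hab
    rw [mem_droplet] at hp hq ⊢
    have e1 : (a • p + b • q).1 = a * p.1 + b * q.1 := rfl
    have e2 : (a • p + b • q).2 = a * p.2 + b * q.2 := rfl
    rw [e1, e2]
    have c1 : rost (a * (p.1 - p.2) + b * (q.1 - q.2)) t
        ≤ a * rost (p.1 - p.2) t + b * rost (q.1 - q.2) t := rost_comb ht ha hb hab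
    have c2 : rost (a * (p.1 + p.2) + b * (q.1 + q.2)) t
        ≤ a * rost (p.1 + p.2) t + b * rost (q.1 + q.2) t := rost_comb ht ha hb hab
    have d1 : |a * (p.1 + p.2) + b * (q.1 + q.2)| ≤ a * |p.1 + p.2| + b * |q.1 + q.2| := by
      calc |a * (p.1 + p.2) + b * (q.1 + q.2)|
          ≤ |a * (p.1 + p.2)| + |b * (q.1 + q.2)| := abs_add_le _ _
        _ = a * |p.1 + p.2| + b * |q.1 + q.2| := by
            rw [abs_mul, abs_mul, abs_of_nonneg ha, abs_of_nonneg hb]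
    have d2 : |a * (p.1 - p.2) + b * (q.1 - q.2)| ≤ a * |p.1 - p.2| + b * |q.1 - q.2| := by
      calc |a * (p.1 - p.2) + b * (q.1 - q.2)|
          ≤ |a * (p.1 - p.2)| + |b * (q.1 - q.2)| := abs_add_le _ _
        _ = a * |p.1 - p.2| + b * |q.1 - q.2| := by
            rw [abs_mul, abs_mul, abs_of_nonneg ha, abs_of_nonneg hb]
    rw [show a * p.1 + b * q.1 - (a * p.2 + b * q.2) = a * (p.1 - p.2) + b * (q.1 - q.2)
      by ring, show a * p.1 + b * q.1 + (a * p.2 + b * q.2) = a * (p.1 + p.2) + b * (q.1 + q.2)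
      by ring]
    have hp1 := hp.1; have hp2 := hp.2; have hq1 := hq.1; have hq2 := hq.2
    constructor
    · nlinarith [mul_le_mul_of_nonneg_left hp1 ha, mul_le_mul_of_nonneg_left hq1 hb]
    · nlinarith [mul_le_mul_of_nonneg_left hp2 ha, mul_le_mul_of_nonneg_left hq2 hb]
  · -- Compactness
    have hclosed : IsClosed (droplet t) := by
      have : droplet t = {p : ℝ × ℝ | rost (p.1 - p.2) t + |p.1 + p.2| ≤ 2}
          ∩ {p : ℝ × ℝ | rost (p.1 + p.2) t + |p.1 - p.2| ≤ 2} := by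
        ext p; rw [mem_droplet]; rfl
      rw [this]
      have hc1 : Continuous fun p : ℝ × ℝ => rost (p.1 - p.2) t + |p.1 + p.2| := by
        apply Continuous.add
        · exact (rost_continuous ht).comp (continuous_fst.sub continuous_snd)
        · exact continuous_abs.comp (continuous_fst.add continuous_snd)
      have hc2 : Continuous fun p : ℝ × ℝ => rost (p.1 + p.2) t + |p.1 - p.2| := by
        apply Continuous.add
        · exact (rost_continuous ht).comp (continuous_fst.add continuous_snd)
        · exact continuous_abs.comp (continuous_fst.sub continuous_snd)
      exact (isClosed_le hc1 continuous_const).inter (isClosed_le hc2 continuous_const)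
    have hsub : droplet t ⊆ Icc ((-2, -2) : ℝ × ℝ) ((2, 2) : ℝ × ℝ) := by
      intro p hp
      rw [mem_droplet] at hp
      have h1 := abs_le_rost ht (p.1 - p.2)
      have h2 := abs_le_rost ht (p.1 + p.2)
      have a1 := abs_nonneg (p.1 + p.2)
      have a2 := abs_nonneg (p.1 - p.2)
      have b1 : |p.1 - p.2| ≤ 2 := by linarith [hp.1]
      have b2 : |p.1 + p.2| ≤ 2 := by linarith [hp.2]
      rw [abs_le] at b1 b2
      simp only [mem_Icc, Prod.le_def]
      refine ⟨⟨?_, ?_⟩, ?_, ?_⟩ <;> linarith [b1.1, b1.2, b2.1, b2.2]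
    exact (isCompact_Icc).of_isClosed_subset hclosed hsub
  · -- Nonemptiness
    constructor
    · rintro ⟨p, hp⟩
      rw [mem_droplet] at hp
      have h1 := half_le_rost ht (p.1 - p.2)
      have a1 := abs_nonneg (p.1 + p.2)
      linarith [hp.1]
    · intro h4
      refine ⟨(0, 0), ?_⟩
      rw [mem_droplet]
      simp only []
      rw [show (0:ℝ) - 0 = 0 by ring, show (0:ℝ) + 0 = 0 by ring, rost_zero_left ht]
      simp
      linarith
end

section
/- Let g(x,t) = (x²+t²)/(2t) for |x| ≤ t and g(x,t) = |x| for |x| ≥ t, let t ∈ [1,4), d(t) = 2√t − t, 0 < δ ≤ d(t), and let ḡ(x,t) = g(x,t) − 2 for |x| ≤ d(t) − δ and ḡ(x,t) = |x| − (d(t)−δ) + g(d(t)−δ, t) − 2 for |x| ≥ d(t) − δ. With f₁ = (1/2, −1/2), f₂ = (1/2, 1/2), let D₁(t) (resp. D̄₁(t)) be the epigraph { x f₁ + y f₂ : y ≥ g(x,t) − 2 } (resp. { x f₁ + y f₂ : y ≥ ḡ(x,t) }), let Dᵢ(t), D̄ᵢ(t) (i = 2,3,4) be their rotations by (i−1)π/2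 about the origin, and set D(t) = ∩ᵢ Dᵢ(t), D̄(t) = ∩ᵢ D̄ᵢ(t). Then D̄(t) = D(t) ∩ [−r(t), r(t)]², where r(t) = ( (d(t) − δ) + 2 − g(d(t)−δ, t) )/2 is the unique solution of ḡ(x,t) = −x. -/
open Real Set

/-- `d(t) = 2√t − t`. -/
noncomputable def dPole (t : ℝ) : ℝ := 2 * Real.sqrt t - t

/-- The modified (pole-flattened) profile `ḡ(x,t)`: equal to `g(x,t) − 2` for
`|x| ≤ d(t) − δ`, extended with slopes `±1` outside. -/
noncomputable def rostBar (δ x t : ℝ) : ℝ :=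
  if |x| ≤ dPole t - δ then rost x t - 2
  else |x| - (dPole t - δ) + rost (dPole t - δ) t - 2

/-- `r(t) = ((d(t) − δ) + 2 − g(d(t)−δ, t))/2`, the unique solution of `ḡ(x,t) = −x`. -/
noncomputable def rPole (δ t : ℝ) : ℝ := ((dPole t - δ) + 2 - rost (dPole t - δ) t) / 2

/-- `D̄₁(t)`: the epigraph of `ḡ(·,t)` in the frame `(0, f₁, f₂)`. -/
noncomputable def dropletBarOne (δ t : ℝ) : Set (ℝ × ℝ) :=
  {p | ∃ x y : ℝ, rostBar δ x t ≤ y ∧ p = x • fOne + y • fTwo}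

/-- `D̄(t)`, the intersection of the four rotations of `D̄₁(t)` by multiples of `π/2`. -/
noncomputable def dropletBar (δ t : ℝ) : Set (ℝ × ℝ) :=
  dropletBarOne δ t ∩ (rotQuarter '' dropletBarOne δ t) ∩
    (rotQuarter '' (rotQuarter '' dropletBarOne δ t)) ∩
    (rotQuarter '' (rotQuarter '' (rotQuarter '' dropletBarOne δ t)))

lemma rostBar_neg (δ x t : ℝ) : rostBar δ (-x) t = rostBar δ x t := by
  simp [rostBar, abs_neg, rost_neg]

lemma mem_rot_image (S : Set (ℝ × ℝ)) (p : ℝ × ℝ) :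
    p ∈ rotQuarter '' S ↔ (p.2, -p.1) ∈ S := by
  constructor
  · rintro ⟨q, hq, rfl⟩; simpa [rotQuarter] using hq
  · intro h; exact ⟨(p.2, -p.1), h, by simp [rotQuarter]⟩

lemma mem_dropletOne_iff (t : ℝ) (p : ℝ × ℝ) :
    p ∈ dropletOne t ↔ rost (p.1 - p.2) t - 2 ≤ p.1 + p.2 := by
  constructor
  · rintro ⟨x, y, h, rfl⟩
    have e1 : (x • fOne + y • fTwo).1 - (x • fOne + y • fTwo).2 = x := by
      simp [fOne, fTwo]; ring
    have e2 : (x • fOne + y • fTwo).1 + (x • fOne + y • fTwo).2 = y := by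
      simp [fOne, fTwo]; ring
    rw [e1, e2]; exact h
  · intro h
    refine ⟨p.1 - p.2, p.1 + p.2, h, ?_⟩
    simp [fOne, fTwo, Prod.ext_iff]
    constructor <;> ring

lemma mem_dropletBarOne_iff (δ t : ℝ) (p : ℝ × ℝ) :
    p ∈ dropletBarOne δ t ↔ rostBar δ (p.1 - p.2) t ≤ p.1 + p.2 := by
  constructor
  · rintro ⟨x, y, h, rfl⟩
    have e1 : (x • fOne + y • fTwo).1 - (x • fOne + y • fTwo).2 = x := by
      simp [fOne, fTwo]; ring
    have e2 : (x • fOne + y • fTwo).1 + (x • fOne + y • fTwo).2 = y := by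
      simp [fOne, fTwo]; ring
    rw [e1, e2]; exact h
  · intro h
    refine ⟨p.1 - p.2, p.1 + p.2, h, ?_⟩
    simp [fOne, fTwo, Prod.ext_iff]
    constructor <;> ring

lemma square_iff (u v r : ℝ) : |u + v| + |u - v| ≤ 2 * r ↔ |u| ≤ r ∧ |v| ≤ r := by
  rcases abs_cases (u + v) with ⟨e1, _⟩ | ⟨e1, _⟩ <;>
  rcases abs_cases (u - v) with ⟨e2, _⟩ | ⟨e2, _⟩ <;>
  rcases abs_cases u with ⟨e3, _⟩ | ⟨e3, _⟩ <;>
  rcases abs_cases v with ⟨e4, _⟩ | ⟨e4, _⟩ <;>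
  rw [e1, e2, e3, e4] <;>
  exact ⟨fun h => ⟨by linarith, by linarith⟩, fun h => by linarith [h.1, h.2]⟩

lemma sqrt_facts {t : ℝ} (ht1 : 1 ≤ t) (ht4 : t < 4) :
    Real.sqrt t ^ 2 = t ∧ 1 ≤ Real.sqrt t ∧ Real.sqrt t < 2 := by
  have h0 : (0:ℝ) ≤ t := by linarith
  refine ⟨Real.sq_sqrt h0, Real.one_le_sqrt.mpr ht1, ?_⟩
  have : Real.sqrt t < Real.sqrt 4 := Real.sqrt_lt_sqrt h0 ht4
  rwa [show (4:ℝ) = 2 ^ 2 by norm_num, Real.sqrt_sq (by norm_num : (0:ℝ) ≤ 2)] at this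

lemma dPole_facts {t : ℝ} (ht1 : 1 ≤ t) (ht4 : t < 4) : 0 < dPole t ∧ dPole t ≤ t := by
  obtain ⟨hst, h1s, hs2⟩ := sqrt_facts ht1 ht4
  constructor <;> unfold dPole <;> nlinarith

lemma rost_eval {t x : ℝ} (hx0 : 0 ≤ x) (hxt : x ≤ t) :
    rost x t = (x ^ 2 + t ^ 2) / (2 * t) := by
  unfold rost; rw [if_pos]; rwa [abs_of_nonneg hx0]

lemma F3 {t δ : ℝ} (ht1 : 1 ≤ t) (ht4 : t < 4) (hδ : 0 < δ) (hδd : δ ≤ dPole t) :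
    (dPole t - δ) + (rost (dPole t - δ) t - 2) ≤ 0 := by
  obtain ⟨hst, h1s, hs2⟩ := sqrt_facts ht1 ht4
  obtain ⟨hd0, hdt⟩ := dPole_facts ht1 ht4
  set c := dPole t - δ with hc
  have hc0 : 0 ≤ c := by linarith
  have hct : c ≤ t := by linarith
  rw [rost_eval hc0 hct]
  have h1 : c + t < 2 * Real.sqrt t := by rw [hc]; unfold dPole; linarith
  have h2 : (c + t) * (c + t) ≤ (2 * Real.sqrt t) * (2 * Real.sqrt t) :=
    mul_le_mul h1.le h1.le (by linarith) (by positivity)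
  have ht0 : (0:ℝ) < t := by linarith
  have h3 : (c ^ 2 + t ^ 2) / (2 * t) ≤ 2 - c := by
    rw [div_le_iff₀ (by linarith)]; nlinarith
  linarith

lemma bar_ge {t δ : ℝ} (ht1 : 1 ≤ t) (ht4 : t < 4) (hδ : 0 < δ) (hδd : δ ≤ dPole t)
    (x : ℝ) : rost x t - 2 ≤ rostBar δ x t := by
  obtain ⟨hd0, hdt⟩ := dPole_facts ht1 ht4
  set c := dPole t - δ with hc
  have hc0 : 0 ≤ c := by linarith
  have hct : c ≤ t := by linarith
  have ht0 : (0:ℝ) < t := by linarith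
  unfold rostBar
  rw [← hc]
  split_ifs with h
  · linarith
  · push_neg at h
    rw [rost_eval hc0 hct]
    unfold rost
    split_ifs with h2
    · have h3 : (x ^ 2 - c ^ 2) / (2 * t) ≤ |x| - c := by
        rw [div_le_iff₀ (by linarith)]
        nlinarith [sq_abs x, abs_nonneg x]
      have h4 : (x ^ 2 + t ^ 2) / (2 * t) - (c ^ 2 + t ^ 2) / (2 * t)
          = (x ^ 2 - c ^ 2) / (2 * t) := by ring
      linarith
    · have h5 : c ≤ (c ^ 2 + t ^ 2) / (2 * t) := by
        rw [le_div_iff₀ (by linarith)]; nlinarith [sq_nonneg (c - t)]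
      linarith

lemma core {t δ : ℝ} (ht1 : 1 ≤ t) (ht4 : t < 4) (hδ : 0 < δ) (hδd : δ ≤ dPole t)
    (s w : ℝ) :
    (rostBar δ w t ≤ s ∧ rostBar δ s t ≤ -w ∧ rostBar δ w t ≤ -s ∧ rostBar δ s t ≤ w)
      ↔ (rost w t - 2 ≤ s ∧ rost s t - 2 ≤ -w ∧ rost w t - 2 ≤ -s ∧ rost s t - 2 ≤ w)
        ∧ |s| + |w| ≤ 2 * rPole δ t := by
  obtain ⟨hd0, hdt⟩ := dPole_facts ht1 ht4
  set c := dPole t - δ with hc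
  have hF3 := F3 ht1 ht4 hδ hδd
  rw [← hc] at hF3
  have hr : 2 * rPole δ t = c + 2 - rost c t := by unfold rPole; rw [← hc]; ring
  have hBle : ∀ x, |x| ≤ c → rostBar δ x t = rost x t - 2 := by
    intro x hx; unfold rostBar; rw [← hc, if_pos hx]
  have hBgt : ∀ x, ¬ |x| ≤ c → rostBar δ x t = |x| - c + rost c t - 2 := by
    intro x hx; unfold rostBar; rw [← hc, if_neg hx]
  constructor
  · rintro ⟨h1, h2, h3, h4⟩
    have g := bar_ge ht1 ht4 hδ hδd
    refine ⟨⟨by linarith [g w], by linarith [g s], by linarith [g w], by linarith [g s]⟩, ?_⟩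
    rw [hr]
    by_cases hw : |w| ≤ c
    · by_cases hs : |s| ≤ c
      · linarith
      · rw [hBgt s hs] at h2 h4
        rcases abs_cases w with ⟨e, _⟩ | ⟨e, _⟩ <;> linarith
    · rw [hBgt w hw] at h1 h3
      rcases abs_cases s with ⟨e, _⟩ | ⟨e, _⟩ <;> linarith
  · rintro ⟨⟨g1, g2, g3, g4⟩, hb⟩
    rw [hr] at hb
    refine ⟨?_, ?_, ?_, ?_⟩
    · by_cases hw : |w| ≤ c
      · rw [hBle w hw]; exact g1
      · rw [hBgt w hw]; linarith [neg_abs_le s]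
    · by_cases hs : |s| ≤ c
      · rw [hBle s hs]; exact g2
      · rw [hBgt s hs]; linarith [le_abs_self w]
    · by_cases hw : |w| ≤ c
      · rw [hBle w hw]; exact g3
      · rw [hBgt w hw]; linarith [le_abs_self s]
    · by_cases hs : |s| ≤ c
      · rw [hBle s hs]; exact g4
      · rw [hBgt s hs]; linarith [neg_abs_le w]

/-- `D̄(t) = D(t) ∩ [−r(t), r(t)]²`. -/
theorem dropletBar_eq_inter_square (t δ : ℝ) (ht : t ∈ Ico (1:ℝ) 4) (hδ : 0 < δ)
    (hδd : δ ≤ dPole t) :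
    dropletBar δ t
      = droplet t ∩ Icc (-(rPole δ t), -(rPole δ t)) (rPole δ t, rPole δ t) := by
  obtain ⟨ht1, ht4⟩ := ht
  ext ⟨u, v⟩
  simp only [dropletBar, droplet, mem_inter_iff, mem_rot_image, mem_dropletBarOne_iff,
    mem_dropletOne_iff, mem_Icc, Prod.mk_le_mk]
  rw [show v - -u = u + v by ring, show -u - -v = -(u - v) by ring,
    show -v - - -u = -(u + v) by ring, rostBar_neg, rostBar_neg, rost_neg, rost_neg,
    show v + -u = -(u - v) by ring, show -u + -v = -(u + v) by ring,
    show -v + - -u = u - v by ring]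
  have hcore := core ht1 ht4 hδ hδd (u + v) (u - v)
  have hsq := square_iff u v (rPole δ t)
  constructor
  · rintro ⟨⟨⟨h1, h2⟩, h3⟩, h4⟩
    obtain ⟨⟨g1, g2, g3, g4⟩, hb⟩ := hcore.mp ⟨h1, h2, h3, h4⟩
    obtain ⟨hu, hv⟩ := hsq.mp hb
    rw [abs_le] at hu hv
    exact ⟨⟨⟨⟨g1, g2⟩, g3⟩, g4⟩, ⟨hu.1, hv.1⟩, ⟨hu.2, hv.2⟩⟩
  · rintro ⟨⟨⟨⟨g1, g2⟩, g3⟩, g4⟩, ⟨hu1, hv1⟩, ⟨hu2, hv2⟩⟩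
    have hb : |u + v| + |u - v| ≤ 2 * rPole δ t :=
      hsq.mpr ⟨abs_le.mpr ⟨hu1, hu2⟩, abs_le.mpr ⟨hv1, hv2⟩⟩
    obtain ⟨h1, h2, h3, h4⟩ := hcore.mpr ⟨⟨g1, g2, g3, g4⟩, hb⟩
    exact ⟨⟨⟨h1, h2⟩, h3⟩, h4⟩
end
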